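/- Let t > 0 and −π/3 < θ < π/3. Then f₁(t,θ) + 3f₂(t,θ) = 4cos²(θ/2)·|t − e^{iθ}|⁴·(t² + (4cosθ − 3)t + 1)/(2cosθ − 1). Moreover, if (θ, t) ≠ (0, 1) then f₁(t,θ) > 0 and f₁(t,θ) + 3f₂(t,θ) > 0. -/

import Mathlib

open Complex

noncomputable def f1 (t θ : ℝ) : ℝ := 1 - 2 * t ^ 3 * Real.cos (3 * θ) + t ^ 6

noncomputable def f2 (t θ : ℝ) : ℝ :=
  Complex.normSq ((t : ℂ) - exp (θ * I)) *
    (1 - 2 * t + t ^ 2 - 2 * t ^ 3 + t ^ 4 - 2 * t ^ 2 * Real.cos (3 * θ)) /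
    (2 * Real.cos θ - 1)

/-!
With `c = cos θ` and `q = |t - e^{iθ}|² = t² - 2ct + 1`, the triple-angle formula makes
`(2c - 1)(f₁ + 3f₂) = 2(1 + c) q² (t² + (4c - 3)t + 1)` a polynomial identity in `t` and `c`.
For `|θ| < π/3` we have `c > 1/2`, so every factor on the right is positive: the quadratic in `t`
has discriminant `(4c - 3)² - 4 < 0`, and `q` vanishes only at `(θ, t) = (0, 1)`.
So does `f₁ = (t³ - cos 3θ)² + sin² 3θ`, because `sin 3θ = 0` forces `θ = 0`.
-/

lemma normSq_ofReal_sub_exp_mul_I (t θ : ℝ) :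
    Complex.normSq ((t : ℂ) - exp (θ * I)) = t ^ 2 - 2 * t * Real.cos θ + 1 := by
  simp only [Complex.normSq_apply, Complex.sub_re, Complex.sub_im, Complex.ofReal_re,
    Complex.ofReal_im, Complex.exp_ofReal_mul_I_re, Complex.exp_ofReal_mul_I_im]
  linear_combination Real.sin_sq_add_cos_sq θ

lemma f1_eq_sq_add_sq (t θ : ℝ) :
    f1 t θ = (t ^ 3 - Real.cos (3 * θ)) ^ 2 + Real.sin (3 * θ) ^ 2 := by
  rw [f1]
  linear_combination -Real.sin_sq_add_cos_sq (3 * θ)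

lemma f1_add_three_f2_eq (t θ : ℝ) (hθ : 2 * Real.cos θ - 1 ≠ 0) :
    f1 t θ + 3 * f2 t θ =
      4 * Real.cos (θ / 2) ^ 2 * Complex.normSq ((t : ℂ) - exp (θ * I)) ^ 2 *
        (t ^ 2 + (4 * Real.cos θ - 3) * t + 1) / (2 * Real.cos θ - 1) := by
  have hhalf : Real.cos (θ / 2) ^ 2 = 1 / 2 + Real.cos θ / 2 := by
    rw [Real.cos_sq, mul_div_cancel₀ θ two_ne_zero]
  rw [f1, f2, normSq_ofReal_sub_exp_mul_I, Real.cos_three_mul, hhalf]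
  field_simp
  ring

lemma normSq_ofReal_sub_exp_mul_I_pos {t θ : ℝ} (hθl : -Real.pi < θ) (hθr : θ < Real.pi)
    (h : ¬(θ = 0 ∧ t = 1)) :
    0 < Complex.normSq ((t : ℂ) - exp (θ * I)) := by
  refine Complex.normSq_pos.mpr (sub_ne_zero.mpr fun heq => h ?_)
  have hsin : Real.sin θ = 0 := by
    simpa [Complex.exp_ofReal_mul_I_im] using (congrArg Complex.im heq).symm
  have hθ : θ = 0 := by
    rwa [Real.sin_eq_zero_iff_of_lt_of_lt hθl hθr] at hsin
  refine ⟨hθ, ?_⟩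
  simpa [hθ] using heq

section ThirdOfPi

variable {θ : ℝ} (hθl : -(Real.pi / 3) < θ) (hθr : θ < Real.pi / 3)
include hθl hθr

lemma half_lt_cos_of_neg_pi_div_three_lt_of_lt_pi_div_three : 1 / 2 < Real.cos θ := by
  rw [← Real.cos_abs, ← Real.cos_pi_div_three]
  exact Real.cos_lt_cos_of_nonneg_of_le_pi (abs_nonneg θ) (by linarith [Real.pi_pos])
    (abs_lt.mpr ⟨hθl, hθr⟩)

lemma f1_pos {t : ℝ} (h : ¬(θ = 0 ∧ t = 1)) : 0 < f1 t θ := by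
  rw [f1_eq_sq_add_sq]
  by_cases hsin : Real.sin (3 * θ) = 0
  · have hθ : θ = 0 := by
      rw [Real.sin_eq_zero_iff_of_lt_of_lt (by linarith) (by linarith)] at hsin
      linarith
    have ht : t ^ 3 ≠ 1 ^ 3 := fun ht => h ⟨hθ, (Odd.pow_inj (by decide)).mp ht⟩
    have : t ^ 3 - Real.cos (3 * θ) ≠ 0 := by
      simpa [hθ, sub_eq_zero] using ht
    positivity
  · positivity

end ThirdOfPi

theorem f1_add_three_f2_general (t θ : ℝ)
    (hθl : -(Real.pi / 3) < θ) (hθr : θ < Real.pi / 3) :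
    f1 t θ + 3 * f2 t θ =
      4 * Real.cos (θ / 2) ^ 2 * Complex.normSq ((t : ℂ) - exp (θ * I)) ^ 2 *
        (t ^ 2 + (4 * Real.cos θ - 3) * t + 1) / (2 * Real.cos θ - 1) ∧
    (¬(θ = 0 ∧ t = 1) → 0 < f1 t θ ∧ 0 < f1 t θ + 3 * f2 t θ) := by
  have hcos := half_lt_cos_of_neg_pi_div_three_lt_of_lt_pi_div_three hθl hθr
  have hden : 0 < 2 * Real.cos θ - 1 := by linarith
  have hid := f1_add_three_f2_eq t θ hden.ne'
  refine ⟨hid, fun h => ⟨f1_pos hθl hθr h, ?_⟩⟩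
  have hhalf : 0 < Real.cos (θ / 2) :=
    Real.cos_pos_of_mem_Ioo ⟨by linarith [Real.pi_pos], by linarith [Real.pi_pos]⟩
  have hq := normSq_ofReal_sub_exp_mul_I_pos
    (by linarith [Real.pi_pos]) (by linarith [Real.pi_pos]) h
  have hquad : 0 < t ^ 2 + (4 * Real.cos θ - 3) * t + 1 := by
    nlinarith [sq_nonneg (2 * t + (4 * Real.cos θ - 3)), Real.cos_le_one θ]
  rw [hid]
  positivity

/-- The identity for `f₁ + 3f₂` and the strict positivity of `f₁` and `f₁ + 3f₂`
when `(θ,t) ≠ (0,1)`. -/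
theorem f1_add_three_f2 (t θ : ℝ) (ht : 0 < t)
    (hθl : -(Real.pi / 3) < θ) (hθr : θ < Real.pi / 3) :
    f1 t θ + 3 * f2 t θ =
      4 * Real.cos (θ / 2) ^ 2 * Complex.normSq ((t : ℂ) - exp (θ * I)) ^ 2 *
        (t ^ 2 + (4 * Real.cos θ - 3) * t + 1) / (2 * Real.cos θ - 1) ∧
    (¬(θ = 0 ∧ t = 1) → 0 < f1 t θ ∧ 0 < f1 t θ + 3 * f2 t θ) :=
  f1_add_three_f2_general t θ hθl hθr
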